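/- arXiv:0909.0188 — 4 statements merged into one kernel-verified Lean document; each statement's English description precedes it below -/
import Mathlib

section
/- For set partitions p, q of a finite set X and a permutation γ of X acting on partitions by relabeling, the quantity |p ∨ γ(q)| + |p ∨ q| − |p| − |q| is at most 0, with equality if and only if p = q and γ(q) = q. -/
/-- The action of a permutation `γ` on set partitions (setoids) by relabeling. -/
def Setoid.permMap {X : Type*} (γ : Equiv.Perm X) (p : Setoid X) : Setoid X :=
  Setoid.comap γ.symm p

private def quotMapAux {X : Type*} {p r : Setoid X} (h : p ≤ r) :
    Quotient p → Quotient r :=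
  Quotient.map' id (fun _ _ hab => h hab)

private lemma quotMapAux_surj {X : Type*} {p r : Setoid X} (h : p ≤ r) :
    Function.Surjective (quotMapAux h) := by
  intro x
  induction x using Quotient.inductionOn with
  | h a => exact ⟨Quotient.mk _ a, rfl⟩

private lemma aux_card_le {X : Type*} [Finite X] {p r : Setoid X} (h : p ≤ r) :
    Nat.card (Quotient r) ≤ Nat.card (Quotient p) :=
  Nat.card_le_card_of_surjective _ (quotMapAux_surj h)

private lemma aux_card_eq {X : Type*} [Finite X] {p r : Setoid X} (h : p ≤ r)
    (hc : Nat.card (Quotient r) = Nat.card (Quotient p)) : p = r := by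
  have hbij : Function.Bijective (quotMapAux h) :=
    (Nat.bijective_iff_surjective_and_card _).2 ⟨quotMapAux_surj h, hc.symm⟩
  ext a b
  constructor
  · exact fun hab => h hab
  · intro hab
    have : quotMapAux h (Quotient.mk p a) = quotMapAux h (Quotient.mk p b) := by
      simpa [quotMapAux, Quotient.map'_mk''] using Quotient.sound hab
    exact Quotient.exact (hbij.1 this)

private lemma permMap_card {X : Type*} (γ : Equiv.Perm X) (q : Setoid X) :
    Nat.card (Quotient (Setoid.permMap γ q)) = Nat.card (Quotient q) :=
  Nat.card_congr (Quotient.congr γ.symm (fun _ _ => Iff.rfl))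

/-- For partitions `p q` of a finite set `X` and a permutation `γ` of `X`,
`|p ∨ γ(q)| + |p ∨ q| − |p| − |q| ≤ 0`, with equality iff `p = q` and `γ(q) = q`. -/
theorem card_blocks_sup_permMap {X : Type*} [Fintype X] (γ : Equiv.Perm X) (p q : Setoid X) :
    ((Nat.card (Quotient (p ⊔ Setoid.permMap γ q)) : ℤ) + Nat.card (Quotient (p ⊔ q))
        - Nat.card (Quotient p) - Nat.card (Quotient q) ≤ 0) ∧
      ((Nat.card (Quotient (p ⊔ Setoid.permMap γ q)) : ℤ) + Nat.card (Quotient (p ⊔ q))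
          - Nat.card (Quotient p) - Nat.card (Quotient q) = 0 ↔
        p = q ∧ Setoid.permMap γ q = q) := by
  have h1 : Nat.card (Quotient (p ⊔ Setoid.permMap γ q)) ≤ Nat.card (Quotient p) :=
    aux_card_le le_sup_left
  have h2 : Nat.card (Quotient (p ⊔ Setoid.permMap γ q)) ≤ Nat.card (Quotient q) := by
    simpa [permMap_card] using aux_card_le (p := Setoid.permMap γ q) (le_sup_right (a := p))
  have h3 : Nat.card (Quotient (p ⊔ q)) ≤ Nat.card (Quotient p) := aux_card_le le_sup_left
  have h4 : Nat.card (Quotient (p ⊔ q)) ≤ Nat.card (Quotient q) := aux_card_le le_sup_right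
  refine ⟨by omega, ?_⟩
  constructor
  · intro heq
    have ha : Nat.card (Quotient (p ⊔ Setoid.permMap γ q)) = Nat.card (Quotient p) := by omega
    have ha' : Nat.card (Quotient (p ⊔ Setoid.permMap γ q)) = Nat.card (Quotient q) := by omega
    have hb : Nat.card (Quotient (p ⊔ q)) = Nat.card (Quotient p) := by omega
    have hb' : Nat.card (Quotient (p ⊔ q)) = Nat.card (Quotient q) := by omega
    have hpq1 : p = p ⊔ q := aux_card_eq le_sup_left hb
    have hpq2 : q = p ⊔ q := aux_card_eq le_sup_right hb'
    have hpq : p = q := hpq1.trans hpq2.symm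
    have hg1 : Setoid.permMap γ q = p ⊔ Setoid.permMap γ q := by
      refine aux_card_eq le_sup_right ?_
      rw [ha', permMap_card]
    have hg2 : p = p ⊔ Setoid.permMap γ q := aux_card_eq le_sup_left ha
    exact ⟨hpq, (hg1.trans hg2.symm).trans hpq⟩
  · rintro ⟨rfl, hg⟩
    rw [hg, sup_idem]

    omega
end

section
/- Let X be the disjoint union of two cycles Z/k₁Z and Z/k₂Z, and let γ act by simultaneous rotation i ↦ i+1 on each cycle. The number of perfect matchings p of X satisfying γ(p) = p and p ∨ γ̄ = 1 (i.e., p connects the two cycles) is k₁ if k₁ = k₂, and 0 if k₁ ≠ k₂. -/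
set_option linter.deprecated false


/-- A partition is a perfect matching (pairing) if every block has size exactly two. -/
def IsPairing {X : Type*} (p : Setoid X) : Prop :=
  ∀ x : X, ∃! y : X, y ≠ x ∧ p.r x y

section Aux
open Sum

variable {k₁ k₂ : ℕ}

private abbrev myγ (k₁ k₂ : ℕ) : Equiv.Perm (ZMod k₁ ⊕ ZMod k₂) :=
  Equiv.sumCongr (Equiv.addRight (1 : ZMod k₁)) (Equiv.addRight (1 : ZMod k₂))

lemma rel_shift {p : Setoid (ZMod k₁ ⊕ ZMod k₂)}
    (hγ : Setoid.permMap (myγ k₁ k₂) p = p) {x y} (h : p.r x y) :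
    p.r (myγ k₁ k₂ x) (myγ k₁ k₂ y) := by
  rw [← hγ]
  refine (Setoid.comap_rel _ _ _ _).mpr ?_
  rw [Equiv.symm_apply_apply, Equiv.symm_apply_apply]; exact h

lemma rel_shift_n {p : Setoid (ZMod k₁ ⊕ ZMod k₂)}
    (hγ : Setoid.permMap (myγ k₁ k₂) p = p) {i : ZMod k₁} {j : ZMod k₂}
    (h : p.r (inl i) (inr j)) (n : ℕ) :
    p.r (inl (i + n)) (inr (j + n)) := by
  induction n with
  | zero => simpa using h
  | succ n ih =>
      have := rel_shift hγ ih
      simp only [myγ, Equiv.sumCongr_apply, Sum.map_inl, Sum.map_inr,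
        Equiv.coe_addRight] at this
      have e1 : i + ((n:ℕ)+1 : ℕ) = i + (n:ℕ) + 1 := by push_cast; ring
      have e2 : j + ((n:ℕ)+1 : ℕ) = j + (n:ℕ) + 1 := by push_cast; ring
      rw [e1, e2]
      exact this

end Aux

section Aux2
open Sum

variable {k₁ k₂ : ℕ}

lemma pair_unique {p : Setoid (ZMod k₁ ⊕ ZMod k₂)} (hp : IsPairing p)
    {x y z : ZMod k₁ ⊕ ZMod k₂} (hy : y ≠ x) (hry : p.r x y)
    (hz : z ≠ x) (hrz : p.r x z) : y = z :=
  ((hp x).unique ⟨hy, hry⟩ ⟨hz, hrz⟩)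

lemma exists_cross {p : Setoid (ZMod k₁ ⊕ ZMod k₂)}
    (hsup : p ⊔ Setoid.ker (Sum.isLeft : ZMod k₁ ⊕ ZMod k₂ → Bool) = ⊤) :
    ∃ i j, p.r (inl i) (inr j) := by
  by_contra hc
  push_neg at hc
  have hle : p ≤ Setoid.ker (Sum.isLeft : ZMod k₁ ⊕ ZMod k₂ → Bool) := by
    rw [Setoid.le_def]
    intro x y hxy
    match x, y with
    | inl i, inl j => rfl
    | inr i, inr j => rfl
    | inl i, inr j => exact absurd hxy (hc i j)
    | inr i, inl j => exact absurd (p.symm hxy) (hc j i)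
  rw [sup_eq_right.mpr hle] at hsup
  have : (Setoid.ker (Sum.isLeft : ZMod k₁ ⊕ ZMod k₂ → Bool)).r
      (inl (0 : ZMod k₁)) (inr (0 : ZMod k₂)) := by rw [hsup]; trivial
  have : Sum.isLeft (inl (0:ZMod k₁)) = Sum.isLeft (inr (0:ZMod k₂)) := this
  simp at this

lemma dvd_of_cross {p : Setoid (ZMod k₁ ⊕ ZMod k₂)} (hp : IsPairing p)
    (hγ : Setoid.permMap (myγ k₁ k₂) p = p) {i : ZMod k₁} {j : ZMod k₂}
    (hij : p.r (inl i) (inr j)) : k₂ ∣ k₁ ∧ k₁ ∣ k₂ := by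
  constructor
  · have h1 : p.r (inl (i + (k₁ : ZMod k₁))) (inr (j + (k₁ : ZMod k₂))) :=
      rel_shift_n hγ hij k₁
    rw [ZMod.natCast_self, add_zero] at h1
    have := pair_unique hp (by simp) hij (by simp) h1
    rw [← ZMod.natCast_eq_zero_iff]
    have := inr.inj this
    linear_combination -this
  · have h1 : p.r (inl (i + (k₂ : ZMod k₁))) (inr (j + (k₂ : ZMod k₂))) :=
      rel_shift_n hγ hij k₂
    rw [ZMod.natCast_self, add_zero] at h1
    have := pair_unique hp (by simp) (p.symm hij) (by simp) (p.symm h1)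
    rw [← ZMod.natCast_eq_zero_iff]
    have := inl.inj this
    linear_combination -this

end Aux2

section Model
open Sum

variable {k : ℕ}

private def mdl (k : ℕ) (c : ZMod k) : Setoid (ZMod k ⊕ ZMod k) :=
  Setoid.ker (Sum.elim (id : ZMod k → ZMod k) (· - c))

lemma mdl_rel {c : ZMod k} {x y : ZMod k ⊕ ZMod k} :
    (mdl k c).r x y ↔ Sum.elim (id : ZMod k → ZMod k) (· - c) x
      = Sum.elim (id : ZMod k → ZMod k) (· - c) y := Iff.rfl

lemma mdl_pairing (c : ZMod k) : IsPairing (mdl k c) := by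
  intro x
  match x with
  | inl a =>
      refine ⟨inr (a + c), ⟨by simp, by rw [mdl_rel]; simp⟩, ?_⟩
      rintro (b | b) ⟨hne, hrel⟩
      · rw [mdl_rel] at hrel; simp at hrel; simp [hrel] at hne
      · rw [mdl_rel] at hrel; simp at hrel
        rw [show b = a + c by linear_combination -hrel]
  | inr a =>
      refine ⟨inl (a - c), ⟨by simp, by rw [mdl_rel]; simp⟩, ?_⟩
      rintro (b | b) ⟨hne, hrel⟩
      · rw [mdl_rel] at hrel; simp at hrel
        rw [show b = a - c by linear_combination -hrel]
      · rw [mdl_rel] at hrel; simp at hrel; simp [hrel] at hne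

lemma mdl_inv (c : ZMod k) : Setoid.permMap (myγ k k) (mdl k c) = mdl k c := by
  apply Setoid.ext
  intro x y
  show (mdl k c).r ((myγ k k).symm x) ((myγ k k).symm y) ↔ (mdl k c).r x y
  rw [mdl_rel, mdl_rel]
  have key : ∀ z : ZMod k ⊕ ZMod k,
      Sum.elim (id : ZMod k → ZMod k) (· - c) ((myγ k k).symm z)
        = Sum.elim (id : ZMod k → ZMod k) (· - c) z - 1 := by
    rintro (a | a) <;> simp [myγ] <;> ring
  rw [key, key, sub_left_inj]

lemma mdl_sup (c : ZMod k) :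
    mdl k c ⊔ Setoid.ker (Sum.isLeft : ZMod k ⊕ ZMod k → Bool) = ⊤ := by
  set q := Setoid.ker (Sum.isLeft : ZMod k ⊕ ZMod k → Bool) with hq
  rw [eq_top_iff, Setoid.le_def]
  intro x y _
  have base : ∀ z : ZMod k ⊕ ZMod k, (mdl k c ⊔ q).r z (inl (0 : ZMod k)) := by
    rintro (a | a)
    · exact Setoid.le_def.mp le_sup_right (by rfl)
    · refine (mdl k c ⊔ q).trans
        (Setoid.le_def.mp le_sup_right (show Sum.isLeft _ = Sum.isLeft (inr c) by rfl)) ?_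
      exact Setoid.le_def.mp le_sup_left (show (mdl k c).r _ _ by rw [mdl_rel]; simp)
  exact (mdl k c ⊔ q).trans (base x) ((mdl k c ⊔ q).symm (base y))

lemma cross_all [NeZero k] {p : Setoid (ZMod k ⊕ ZMod k)}
    (hγ : Setoid.permMap (myγ k k) p = p) {i j : ZMod k}
    (hij : p.r (inl i) (inr j)) (m : ZMod k) :
    p.r (inl m) (inr (m + (j - i))) := by
  have h := rel_shift_n hγ hij (m - i).val
  rw [ZMod.natCast_rightInverse (m - i)] at h
  have e1 : i + (m - i) = m := by ring
  have e2 : j + (m - i) = m + (j - i) := by ring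
  rw [e1, e2] at h
  exact h

end Model

section Class
open Sum
variable {k : ℕ}

lemma eq_mdl [NeZero k] {p : Setoid (ZMod k ⊕ ZMod k)} (hp : IsPairing p)
    (hγ : Setoid.permMap (myγ k k) p = p) {i j : ZMod k}
    (hij : p.r (inl i) (inr j)) : p = mdl k (j - i) := by
  set c := j - i with hc
  have hca : ∀ m : ZMod k, p.r (inl m) (inr (m + c)) := fun m => cross_all hγ hij m
  apply Setoid.ext
  rintro (a | a) (b | b)
  · rw [mdl_rel]; simp only [Sum.elim_inl, id_eq]
    constructor
    · intro h
      by_contra hab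
      have := pair_unique hp (fun he => hab (inl.inj he).symm) h (by simp) (hca a)
      exact absurd this (by simp)
    · rintro rfl; exact p.refl _
  · rw [mdl_rel]; simp only [Sum.elim_inl, Sum.elim_inr, id_eq]
    constructor
    · intro h
      have := pair_unique hp (by simp) h (by simp) (hca a)
      have := inr.inj this
      linear_combination -this
    · intro h
      have : b = a + c := by linear_combination -h
      rw [this]; exact hca a
  · rw [mdl_rel]; simp only [Sum.elim_inl, Sum.elim_inr, id_eq]
    constructor
    · intro h
      have h2 := p.symm h
      have := pair_unique hp (by simp) h2 (by simp) (hca b)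
      have := inr.inj this
      linear_combination this
    · intro h
      have : a = b + c := by linear_combination h
      rw [this]; exact p.symm (hca b)
  · rw [mdl_rel]; simp only [Sum.elim_inr]
    rw [sub_left_inj]
    constructor
    · intro h
      by_contra hab
      have hpart : p.r (inr a) (inl (a - c)) := by
        have := p.symm (hca (a - c))
        rwa [sub_add_cancel] at this
      have := pair_unique hp (fun he => hab (inr.inj he).symm) h (by simp) hpart
      exact absurd this (by simp)
    · rintro rfl; exact p.refl _

lemma mdl_inj {c c' : ZMod k} (h : mdl k c = mdl k c') : c = c' := by
  have h1 : (mdl k c).r (inl 0) (inr c) := by rw [mdl_rel]; simp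
  rw [h, mdl_rel] at h1
  simp only [Sum.elim_inl, Sum.elim_inr, id_eq] at h1
  linear_combination -h1

end Class

/-- Let `X` be the disjoint union of two cycles `Z/k₁Z` and `Z/k₂Z`, with `γ` acting by
simultaneous rotation `i ↦ i+1` on each cycle, and let `γ̄` be the partition of `X` into
the two cycles.  The number of perfect matchings `p` of `X` with `γ(p) = p` and
`p ∨ γ̄ = 1` (the one-block partition `⊤`, i.e. `p` connects the two cycles) is `k₁` if
`k₁ = k₂` and `0` otherwise. -/
theorem card_invariant_pairings_two_cycles (k₁ k₂ : ℕ) (h₁ : 0 < k₁) (h₂ : 0 < k₂) :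
    Nat.card {p : Setoid (ZMod k₁ ⊕ ZMod k₂) //
        IsPairing p ∧
        Setoid.permMap
          (Equiv.sumCongr (Equiv.addRight (1 : ZMod k₁)) (Equiv.addRight (1 : ZMod k₂))) p = p ∧
        p ⊔ Setoid.ker (Sum.isLeft : ZMod k₁ ⊕ ZMod k₂ → Bool) = ⊤} =
      if k₁ = k₂ then k₁ else 0 := by
  by_cases hk : k₁ = k₂
  · subst hk
    rw [if_pos rfl]
    haveI : NeZero k₁ := ⟨h₁.ne'⟩
    set S := {p : Setoid (ZMod k₁ ⊕ ZMod k₁) //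
        IsPairing p ∧
        Setoid.permMap
          (Equiv.sumCongr (Equiv.addRight (1 : ZMod k₁)) (Equiv.addRight (1 : ZMod k₁))) p = p ∧
        p ⊔ Setoid.ker (Sum.isLeft : ZMod k₁ ⊕ ZMod k₁ → Bool) = ⊤} with hS
    have hbij : Function.Bijective (fun c : ZMod k₁ =>
        (⟨mdl k₁ c, mdl_pairing c, mdl_inv c, mdl_sup c⟩ : S)) := by
      constructor
      · intro c c' h
        exact mdl_inj (congrArg Subtype.val h)
      · rintro ⟨p, hp, hγ, hsup⟩
        obtain ⟨i, j, hij⟩ := exists_cross hsup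
        exact ⟨j - i, Subtype.ext (eq_mdl hp hγ hij).symm⟩
    rw [← Nat.card_eq_of_bijective _ hbij, Nat.card_zmod]
  · rw [if_neg hk]
    haveI : IsEmpty {p : Setoid (ZMod k₁ ⊕ ZMod k₂) //
        IsPairing p ∧
        Setoid.permMap
          (Equiv.sumCongr (Equiv.addRight (1 : ZMod k₁)) (Equiv.addRight (1 : ZMod k₂))) p = p ∧
        p ⊔ Setoid.ker (Sum.isLeft : ZMod k₁ ⊕ ZMod k₂ → Bool) = ⊤} := by
      refine ⟨?_⟩
      rintro ⟨p, hp, hγ, hsup⟩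
      obtain ⟨i, j, hij⟩ := exists_cross hsup
      obtain ⟨d1, d2⟩ := dvd_of_cross hp hγ hij
      exact hk (Nat.dvd_antisymm d2 d1)
    exact Nat.card_of_isEmpty
end

section
/- Let γ be a permutation of a finite set X with r ≥ 3 cycles, acting on partitions by relabeling. Then there is no perfect matching p of X with γ(p) = p and p ∨ γ̄ = 1_X, where γ̄ is the partition of X into the cycles of γ. -/
/-- The partition `γ̄` of `X` into the cycles (orbits) of a permutation `γ`. -/
def cycleSetoid {X : Type*} (γ : Equiv.Perm X) : Setoid X :=
  ⟨γ.SameCycle, ⟨fun x => Equiv.Perm.SameCycle.refl γ x, fun h => h.symm, fun h₁ h₂ => h₁.trans h₂⟩⟩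

/-- If a permutation `γ` of a finite set `X` has at least `3` cycles, there is no perfect
matching `p` of `X` with `γ(p) = p` and `p ∨ γ̄ = 1_X` (where `γ̄` is the partition of `X`
into the cycles of `γ`, and `1_X = ⊤` is the one-block partition). -/
theorem no_invariant_connecting_pairing_of_three_cycles {X : Type*} [Fintype X]
    (γ : Equiv.Perm X) (hr : 3 ≤ Nat.card (Quotient (cycleSetoid γ))) :
    ¬ ∃ p : Setoid X,
        IsPairing p ∧ Setoid.permMap γ p = p ∧ p ⊔ cycleSetoid γ = ⊤ := by
  rintro ⟨p, hpair, hinv, hsup⟩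
  -- invariance of p under γ (both directions)
  have hrel1 : ∀ a b, p.r a b → p.r (γ a) (γ b) := by
    intro a b h
    have := congrFun (congrFun (congrArg (@Setoid.r X) hinv) (γ a)) (γ b)
    have h2 : p.r (γ.symm (γ a)) (γ.symm (γ b)) = p.r (γ a) (γ b) := this
    simpa using h2 ▸ (by simpa using h : p.r (γ.symm (γ a)) (γ.symm (γ b)))
  have hrel2 : ∀ a b, p.r a b → p.r (γ.symm a) (γ.symm b) := by
    intro a b h
    have := congrFun (congrFun (congrArg (@Setoid.r X) hinv) a) b
    have h2 : p.r (γ.symm a) (γ.symm b) = p.r a b := this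
    rw [h2]; exact h
  have hrelz : ∀ (k : ℤ) a b, p.r a b → p.r ((γ ^ k) a) ((γ ^ k) b) := by
    intro k
    induction k using Int.induction_on with
    | zero => simpa using fun a b h => h
    | succ n ih =>
      intro a b h
      have := ih (γ a) (γ b) (hrel1 a b h)
      simpa [zpow_add_one, Equiv.Perm.mul_apply] using this
    | pred n ih =>
      intro a b h
      have := ih (γ.symm a) (γ.symm b) (hrel2 a b h)
      simpa [zpow_sub_one, Equiv.Perm.mul_apply, Equiv.Perm.inv_def] using this
  -- X is nonempty
  have hfin : Finite (Quotient (cycleSetoid γ)) := Quotient.finite _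
  have hne : Nonempty (Quotient (cycleSetoid γ)) := by
    rcases Nat.card_pos_iff.mp (lt_of_lt_of_le (by norm_num) hr) with ⟨h, _⟩
    exact h
  obtain ⟨q⟩ := hne
  obtain ⟨x, rfl⟩ := q.exists_rep
  obtain ⟨y, ⟨hyx, hxy⟩, _⟩ := hpair x
  -- the "block" of two cycles
  set S : Set X := {z | γ.SameCycle x z ∨ γ.SameCycle y z} with hS
  have hxS : x ∈ S := Or.inl (Equiv.Perm.SameCycle.refl γ x)
  have hSp : ∀ a ∈ S, ∀ b, p.r a b → b ∈ S := by
    intro a ha b hab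
    by_cases hba : b = a
    · exact hba ▸ ha
    rcases ha with ⟨k, hk⟩ | ⟨k, hk⟩
    · -- a = γ^k x, partner is γ^k y
      obtain ⟨w, _, hwu⟩ := hpair a
      have h1 : p.r a ((γ ^ k) y) := hk ▸ hrelz k x y hxy
      have h2 : (γ ^ k) y ≠ a := by
        rw [← hk]; exact fun h => hyx ((γ ^ k).injective h)
      have hb : b = (γ ^ k) y := by
        rw [hwu b ⟨hba, hab⟩, hwu ((γ ^ k) y) ⟨h2, h1⟩]
      exact Or.inr ⟨k, hb.symm⟩
    · obtain ⟨w, _, hwu⟩ := hpair a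
      have h1 : p.r a ((γ ^ k) x) := hk ▸ hrelz k y x (p.symm hxy)
      have h2 : (γ ^ k) x ≠ a := by
        rw [← hk]; exact fun h => hyx ((γ ^ k).injective h).symm
      have hb : b = (γ ^ k) x := by
        rw [hwu b ⟨hba, hab⟩, hwu ((γ ^ k) x) ⟨h2, h1⟩]
      exact Or.inl ⟨k, hb.symm⟩
  have hSc : ∀ a ∈ S, ∀ b, γ.SameCycle a b → b ∈ S := by
    rintro a (ha | ha) b hab
    · exact Or.inl (ha.trans hab)
    · exact Or.inr (ha.trans hab)
  -- there is a cycle outside S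
  have hz : ∃ z : X, z ∉ S := by
    by_contra h
    push_neg at h
    have hsub : (Set.univ : Set (Quotient (cycleSetoid γ))) ⊆
        {Quotient.mk (cycleSetoid γ) x, Quotient.mk (cycleSetoid γ) y} := by
      rintro q -
      obtain ⟨z, rfl⟩ := q.exists_rep
      rcases h z with hc | hc
      · exact Or.inl (Quotient.sound hc).symm
      · exact Or.inr (Quotient.sound hc).symm
    have h1 : Nat.card (Quotient (cycleSetoid γ)) ≤ 2 := by
      have := Set.ncard_le_ncard hsub (Set.toFinite _)
      rw [Set.ncard_univ] at this
      exact this.trans ((Set.ncard_insert_le _ _).trans (by simp [Set.ncard_singleton]))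
    omega
  obtain ⟨z, hzS⟩ := hz
  -- x and z are related by the join
  have htop : (p ⊔ cycleSetoid γ).r x z := by
    rw [hsup]; trivial
  rw [Setoid.sup_eq_eqvGen] at htop
  have key : ∀ a b, Relation.EqvGen (fun u v => p.r u v ∨ (cycleSetoid γ).r u v) a b →
      (a ∈ S ↔ b ∈ S) := by
    intro a b h
    induction h with
    | rel a b h =>
      constructor
      · intro ha
        rcases h with h | h
        · exact hSp a ha b h
        · exact hSc a ha b h
      · intro hb
        rcases h with h | h
        · exact hSp b hb a (p.symm h)
        · exact hSc b hb a (Equiv.Perm.SameCycle.symm h)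
    | refl a => exact Iff.rfl
    | symm a b _ ih => exact ih.symm
    | trans a b c _ _ ih1 ih2 => exact ih1.trans ih2
  exact hzS ((key x z htop).mp hxS)
end

section
/- Let γ ∈ S_k have cycles of lengths k₁,…,k_r with k = Σk_i. The number of partitions p of {1,…,k} all of whose blocks have even size, satisfying γ(p) = p and p ∨ γ̄ = 1_k, equals the sum of q^{r−1} over all common divisors q of k₁,…,k_r such that k/q is even. -/
open scoped Classical

/-- The permutation of the disjoint union of cycles `Z/k_iZ` (`i = 1,…,r`) rotating each
cycle simultaneously by `i ↦ i + 1`; its cycles are exactly the summands. -/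
def sigmaRot (r : ℕ) (ks : Fin r → ℕ) : Equiv.Perm ((i : Fin r) × ZMod (ks i)) :=
  Equiv.sigmaCongrRight fun i => Equiv.addRight (1 : ZMod (ks i))

/-- All blocks of the partition `p` have even size. -/
def HasEvenBlocks {X : Type*} (p : Setoid X) : Prop :=
  ∀ x : X, Even (Nat.card {y : X // p.r x y})

namespace ICEP

variable {r : ℕ} {ks : Fin r → ℕ}

abbrev X (r : ℕ) (ks : Fin r → ℕ) := (i : Fin r) × ZMod (ks i)

/-- Simultaneous rotation of all cycles by `m`. -/
def shift (m : ℤ) (x : X r ks) : X r ks := ⟨x.1, x.2 + (m : ZMod (ks x.1))⟩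

lemma shift_mk (i : Fin r) (u : ZMod (ks i)) (m : ℤ) :
    shift m (⟨i, u⟩ : X r ks) = ⟨i, u + m⟩ := rfl

lemma shift_shift (m n : ℤ) (x : X r ks) : shift m (shift n x) = shift (n + m) x := by
  show (⟨x.1, x.2 + n + m⟩ : X r ks) = ⟨x.1, x.2 + (n + m : ℤ)⟩
  exact congrArg (Sigma.mk x.1) (by push_cast; ring)

@[simp] lemma shift_zero (x : X r ks) : shift 0 x = x := by
  show (⟨x.1, x.2 + (0:ℤ)⟩ : X r ks) = x
  have : x.2 + ((0:ℤ) : ZMod (ks x.1)) = x.2 := by push_cast; ring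
  rw [this]

lemma sigmaRot_apply (x : X r ks) : sigmaRot r ks x = shift 1 x := by
  show (⟨x.1, x.2 + 1⟩ : X r ks) = ⟨x.1, x.2 + ((1:ℤ) : ZMod (ks x.1))⟩
  push_cast; rfl

lemma sigmaRot_symm_apply (x : X r ks) : (sigmaRot r ks).symm x = shift (-1) x := by
  have h : sigmaRot r ks (shift (-1) x) = x := by
    rw [sigmaRot_apply, shift_shift]; norm_num
  have h2 := congrArg (sigmaRot r ks).symm h
  rw [Equiv.symm_apply_apply] at h2
  exact h2.symm

/-- Invariance of a setoid under all integer shifts, from invariance under `sigmaRot`. -/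
lemma rel_shift {p : Setoid (X r ks)} (hp : Setoid.permMap (sigmaRot r ks) p = p)
    (m : ℤ) (x y : X r ks) : p x y ↔ p (shift m x) (shift m y) := by
  have h1 : ∀ x y : X r ks, p x y ↔ p (shift 1 x) (shift 1 y) := by
    intro x y
    have := congrArg (fun q : Setoid (X r ks) => q (shift 1 x) (shift 1 y)) hp
    rw [← this]
    show p x y ↔ p ((sigmaRot r ks).symm (shift 1 x)) ((sigmaRot r ks).symm (shift 1 y))
    rw [sigmaRot_symm_apply, sigmaRot_symm_apply, shift_shift, shift_shift]
    norm_num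
  induction m using Int.induction_on with
  | zero => simp
  | succ n ih =>
      have h2 := ih.trans (h1 (shift n x) (shift n y))
      rwa [shift_shift, shift_shift] at h2
  | pred n ih =>
      have h2 := h1 (shift (-(n:ℤ) - 1) x) (shift (-(n:ℤ) - 1) y)
      rw [shift_shift, shift_shift, show (-(n:ℤ) - 1 + 1) = -(n:ℤ) by ring] at h2
      exact ih.trans h2.symm

section Construction

variable (q : ℕ) (hq : ∀ i, q ∣ ks i) (a : Fin r → ZMod q)

/-- The labelling map whose kernel is the partition attached to `(q, a)`. -/
def F (x : X r ks) : ZMod q := ZMod.castHom (hq x.1) (ZMod q) x.2 - a x.1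

lemma F_shift (m : ℤ) (x : X r ks) : F q hq a (shift m x) = F q hq a x + m := by
  simp only [F, shift]
  show ZMod.castHom (hq x.1) (ZMod q) (x.2 + (m : ZMod (ks x.1))) - a x.1 = _
  rw [map_add, map_intCast]
  ring

lemma F_shift_natCast (m : ℕ) (x : X r ks) : F q hq a (shift m x) = F q hq a x + m := by
  rw [F_shift]; push_cast; ring

lemma ker_F_invariant : Setoid.permMap (sigmaRot r ks) (Setoid.ker (F q hq a)) =
    Setoid.ker (F q hq a) := by
  apply Setoid.ext
  intro x y
  show Setoid.ker (F q hq a) ((sigmaRot r ks).symm x) ((sigmaRot r ks).symm y) ↔ _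
  rw [sigmaRot_symm_apply, sigmaRot_symm_apply, Setoid.ker_def, Setoid.ker_def,
    F_shift, F_shift]
  constructor
  · intro h; exact add_right_cancel h
  · intro h; rw [h]

lemma ker_F_join [NeZero q] : Setoid.ker (F q hq a) ⊔
    Setoid.ker (Sigma.fst : X r ks → Fin r) = ⊤ := by
  rw [eq_top_iff, Setoid.le_def]
  intro x y _
  set c : ZMod q := F q hq a x + a y.1 with hc
  set w : ZMod (ks y.1) := (c.val : ZMod (ks y.1)) with hw
  have hFw : F q hq a ⟨y.1, w⟩ = F q hq a x := by
    have h1 : F q hq a ⟨y.1, w⟩ = ((c.val : ℕ) : ZMod q) - a y.1 := by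
      simp only [F, hw]; rw [map_natCast]
    rw [h1, ZMod.natCast_rightInverse c, hc]
    ring
  have h1 : (Setoid.ker (F q hq a) ⊔ Setoid.ker (Sigma.fst : X r ks → Fin r)) x ⟨y.1, w⟩ :=
    Setoid.le_def.mp le_sup_left (by rw [Setoid.ker_def]; exact hFw.symm)
  have h2 : (Setoid.ker (F q hq a) ⊔ Setoid.ker (Sigma.fst : X r ks → Fin r)) ⟨y.1, w⟩ y :=
    Setoid.le_def.mp le_sup_right (by rw [Setoid.ker_def])
  exact Setoid.trans' _ h1 h2

end Construction

/-- The fibers of the ring map `ZMod n → ZMod q` all have `n / q` elements. -/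
lemma card_fiber_cast {n q : ℕ} [NeZero n] [NeZero q] (hnq : q ∣ n) (c : ZMod q) :
    Nat.card {z : ZMod n // ZMod.castHom hnq (ZMod q) z = c} = n / q := by
  have hq0 : 0 < q := Nat.pos_of_ne_zero (NeZero.ne q)
  have hn0 : 0 < n := Nat.pos_of_ne_zero (NeZero.ne n)
  have key : ∀ j : Fin (n / q), c.val + j.1 * q < n := by
    intro j
    have h2 : 1 ≤ n / q := (Nat.one_le_div_iff hq0).mpr (Nat.le_of_dvd hn0 hnq)
    have hj : j.1 * q ≤ (n / q - 1) * q :=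
      Nat.mul_le_mul_right _ (by have := j.2; omega)
    have hset : (n / q - 1) * q = n - q := by
      rw [Nat.sub_mul, Nat.div_mul_cancel hnq, one_mul]
    rw [hset] at hj
    have hcv : c.val < q := ZMod.val_lt c
    have hqn : q ≤ n := Nat.le_of_dvd hn0 hnq
    omega
  let f : Fin (n / q) → {z : ZMod n // ZMod.castHom hnq (ZMod q) z = c} := fun j =>
    ⟨((c.val + j.1 * q : ℕ) : ZMod n), by
      rw [map_natCast]
      push_cast
      rw [ZMod.natCast_self, mul_zero, add_zero]
      exact ZMod.natCast_rightInverse c⟩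
  have hbij : Function.Bijective f := by
    constructor
    · intro j j' h
      have h2 : ((c.val + j.1 * q : ℕ) : ZMod n) = ((c.val + j'.1 * q : ℕ) : ZMod n) :=
        congrArg Subtype.val h
      have h3 : c.val + j.1 * q = c.val + j'.1 * q := by
        have := congrArg ZMod.val h2
        rwa [ZMod.val_cast_of_lt (key j), ZMod.val_cast_of_lt (key j')] at this
      have : j.1 = j'.1 := by
        have := Nat.add_left_cancel h3
        exact Nat.eq_of_mul_eq_mul_right hq0 this
      exact Fin.ext this
    · rintro ⟨z, hz⟩
      have hvz : (z.val : ZMod q) = c := by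
        rw [ZMod.natCast_val, ← ZMod.castHom_apply (h := hnq), hz]
      have hmod : z.val % q = c.val := by
        rw [← ZMod.val_natCast, hvz]
      refine ⟨⟨z.val / q, Nat.div_lt_div_of_lt_of_dvd hnq (ZMod.val_lt z)⟩, ?_⟩
      apply Subtype.ext
      show ((c.val + z.val / q * q : ℕ) : ZMod n) = z
      rw [← hmod, Nat.mod_add_div']
      exact ZMod.natCast_rightInverse z
  rw [← Nat.card_eq_of_bijective f hbij, Nat.card_eq_fintype_card, Fintype.card_fin]

lemma sum_div_eq (hks : ∀ i, 0 < ks i) {q : ℕ} (hq0 : 0 < q) (hq : ∀ i, q ∣ ks i) :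
    (∑ i, ks i) / q = ∑ i, ks i / q := by
  have : q * ∑ i, ks i / q = ∑ i, ks i := by
    rw [Finset.mul_sum]
    exact Finset.sum_congr rfl fun i _ => Nat.mul_div_cancel' (hq i)
  rw [← this, Nat.mul_div_cancel_left _ hq0]

/-- Each block of `ker (F q a)` has `(∑ ks) / q` elements. -/
lemma card_block (hks : ∀ i, 0 < ks i) (q : ℕ) [NeZero q] (hq : ∀ i, q ∣ ks i)
    (a : Fin r → ZMod q) (x : X r ks) :
    Nat.card {y : X r ks // (Setoid.ker (F q hq a)).r x y} = (∑ i, ks i) / q := by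
  haveI : ∀ i, NeZero (ks i) := fun i => ⟨(hks i).ne'⟩
  have hq0 : 0 < q := Nat.pos_of_ne_zero (NeZero.ne q)
  let e : {y : X r ks // (Setoid.ker (F q hq a)).r x y} ≃
      Σ i : Fin r, {z : ZMod (ks i) // ZMod.castHom (hq i) (ZMod q) z = F q hq a x + a i} :=
    { toFun := fun y => ⟨y.1.1, ⟨y.1.2, by
        have h : F q hq a x = F q hq a y.1 := y.2
        rw [h]; simp [F]⟩⟩
      invFun := fun s => ⟨⟨s.1, s.2.1⟩, by
        show F q hq a x = F q hq a ⟨s.1, s.2.1⟩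
        have h2 := s.2.2
        simp only [F] at h2 ⊢
        rw [h2]
        ring⟩
      left_inv := fun y => rfl
      right_inv := fun s => rfl }
  rw [Nat.card_congr e, Nat.card_eq_fintype_card, Fintype.card_sigma,
    sum_div_eq hks hq0 hq]
  apply Finset.sum_congr rfl
  intro i _
  rw [← Nat.card_eq_fintype_card, card_fiber_cast]

section Helpers

lemma shift_val {j : Fin r} [NeZero (ks j)] (b t : ZMod (ks j)) :
    shift (((t - b).val : ℕ) : ℤ) (⟨j, b⟩ : X r ks) = ⟨j, t⟩ := by
  rw [shift_mk]
  exact congrArg (Sigma.mk j)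
    (by push_cast; rw [ZMod.natCast_val, ZMod.cast_id]; ring)

lemma castHom_eq_natCast_val {n q : ℕ} [NeZero n] (h : q ∣ n) (z : ZMod n) :
    ZMod.castHom h (ZMod q) z = ((z.val : ℕ) : ZMod q) := by
  rw [ZMod.castHom_apply, ZMod.natCast_val]

end Helpers

section Classification

variable {p : Setoid (X r ks)}

lemma connected (hr : 0 < r) (hks : ∀ i, 0 < ks i)
    (hp : Setoid.permMap (sigmaRot r ks) p = p)
    (hjoin : p ⊔ Setoid.ker (Sigma.fst : X r ks → Fin r) = ⊤) (j : Fin r) :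
    ∃ c : ZMod (ks j), p ⟨⟨0, hr⟩, 0⟩ ⟨j, c⟩ := by
  haveI : ∀ i, NeZero (ks i) := fun i => ⟨(hks i).ne'⟩
  have trans_aux : ∀ {x y z : X r ks}, (∃ u v, p ⟨x.1, u⟩ ⟨y.1, v⟩) →
      (∃ u v, p ⟨y.1, u⟩ ⟨z.1, v⟩) → ∃ u v, p ⟨x.1, u⟩ ⟨z.1, v⟩ := by
    rintro x y z ⟨u, v, h1⟩ ⟨u', v', h2⟩
    have hsh := (rel_shift hp (((v - u').val : ℕ) : ℤ) ⟨y.1, u'⟩ ⟨z.1, v'⟩).mp h2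
    rw [shift_val u' v] at hsh
    exact ⟨u, _, p.trans' h1 hsh⟩
  let Q : Setoid (X r ks) :=
    ⟨fun x y => ∃ u v, p ⟨x.1, u⟩ ⟨y.1, v⟩,
      ⟨fun x => ⟨x.2, x.2, p.refl x⟩,
       fun {x y} h => by obtain ⟨u, v, h⟩ := h; exact ⟨v, u, p.symm' h⟩,
       fun {x y z} h1 h2 => trans_aux h1 h2⟩⟩
  have hQtop : Q = ⊤ := by
    rw [eq_top_iff, ← hjoin]
    apply sup_le
    · rw [Setoid.le_def]
      intro x y h
      exact ⟨x.2, y.2, h⟩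
    · rw [Setoid.le_def]
      rintro ⟨i, u⟩ ⟨j', v⟩ h
      have hij : i = j' := h
      subst hij
      exact ⟨u, u, p.refl _⟩
  have hQ : Q ⟨⟨0, hr⟩, 0⟩ ⟨j, 0⟩ := by
    rw [hQtop]
    exact Setoid.top_def ▸ trivial
  obtain ⟨u, v, h⟩ := hQ
  have h2 := (rel_shift hp (((0 - u).val : ℕ) : ℤ) ⟨⟨0, hr⟩, u⟩ ⟨j, v⟩).mp h
  rw [shift_val u 0] at h2
  exact ⟨_, h2⟩

lemma classify (hr : 0 < r) (hks : ∀ i, 0 < ks i)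
    (hp : Setoid.permMap (sigmaRot r ks) p = p)
    (hjoin : p ⊔ Setoid.ker (Sigma.fst : X r ks → Fin r) = ⊤) :
    ∃ (q : ℕ) (hq0 : 0 < q) (hdvd : ∀ i, q ∣ ks i) (a : Fin r → ZMod q),
      a ⟨0, hr⟩ = 0 ∧ p = Setoid.ker (F q hdvd a) := by
  haveI : ∀ i, NeZero (ks i) := fun i => ⟨(hks i).ne'⟩
  set i0 : Fin r := ⟨0, hr⟩ with hi0
  set x0 : X r ks := ⟨i0, 0⟩ with hx0
  choose c pc using connected hr hks hp hjoin
  -- uniformity of the return-time set over base points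
  have uniform : ∀ (y : X r ks) (m : ℤ), p y (shift m y) ↔ p x0 (shift m x0) := by
    rintro ⟨j, b⟩ m
    have stepA : p ⟨j, b⟩ (shift m ⟨j, b⟩) ↔ p ⟨j, c j⟩ (shift m ⟨j, c j⟩) := by
      have h1 := rel_shift hp (((c j - b).val : ℕ) : ℤ) ⟨j, b⟩ (shift m ⟨j, b⟩)
      have h2 : shift ((((c j - b).val : ℕ) : ℤ)) (shift m (⟨j, b⟩ : X r ks))
          = shift m (⟨j, c j⟩ : X r ks) := by
        rw [shift_shift, add_comm m, ← shift_shift, shift_val]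
      rw [shift_val b (c j), h2] at h1
      exact h1
    have hs : p (shift m x0) (shift m ⟨j, c j⟩) := (rel_shift hp m _ _).mp (pc j)
    refine stepA.trans ⟨fun h => ?_, fun h => ?_⟩
    · exact p.trans' (p.trans' (pc j) h) (p.symm' hs)
    · exact p.trans' (p.trans' (p.symm' (pc j)) h) hs
  -- the subgroup of return shifts
  let H : AddSubgroup ℤ :=
    { carrier := {m : ℤ | p x0 (shift m x0)}
      zero_mem' := by
        simp only [Set.mem_setOf_eq, shift_zero]
        exact p.refl x0
      add_mem' := by
        intro m m' hm hm'
        simp only [Set.mem_setOf_eq] at *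
        have h2 := (rel_shift hp m _ _).mp hm'
        rw [shift_shift, add_comm m' m] at h2
        exact p.trans' hm h2
      neg_mem' := by
        intro m hm
        simp only [Set.mem_setOf_eq] at *
        have h2 := (rel_shift hp (-m) _ _).mp hm
        rw [shift_shift, show m + -m = 0 by ring, shift_zero] at h2
        exact p.symm' h2 }
  obtain ⟨g, hg⟩ := Int.subgroup_cyclic H
  set q : ℕ := g.natAbs with hqdef
  have hmem : ∀ m : ℤ, p x0 (shift m x0) ↔ (q : ℤ) ∣ m := by
    intro m
    have hH : p x0 (shift m x0) ↔ m ∈ H := Iff.rfl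
    rw [hH, hg, AddSubgroup.mem_closure_singleton, hqdef, Int.natAbs_dvd,
      dvd_iff_exists_eq_mul_left]
    simp only [zsmul_eq_mul]
    exact ⟨fun ⟨n, h⟩ => ⟨n, h.symm⟩, fun ⟨n, h⟩ => ⟨n, h.symm⟩⟩
  have hdvd : ∀ i, q ∣ ks i := by
    intro i
    have hsh : shift ((ks i : ℤ)) (⟨i, (0 : ZMod (ks i))⟩ : X r ks) = ⟨i, 0⟩ := by
      rw [shift_mk]
      exact congrArg (Sigma.mk i) (by push_cast; simp)
    have h0 : p ⟨i, (0 : ZMod (ks i))⟩ (shift (ks i) ⟨i, 0⟩) := by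
      rw [hsh]
    have hdq := (hmem (ks i)).mp ((uniform ⟨i, 0⟩ (ks i)).mp h0)
    exact_mod_cast hdq
  have hq0 : 0 < q := by
    rcases Nat.eq_zero_or_pos q with h | h
    · exfalso
      have hd := hdvd i0
      rw [h] at hd
      exact (hks i0).ne' (Nat.eq_zero_of_zero_dvd hd)
    · exact h
  haveI : NeZero q := ⟨hq0.ne'⟩
  have zero_iff : ∀ (j : Fin r) (t : ZMod (ks j)),
      p x0 ⟨j, t⟩ ↔ ZMod.castHom (hdvd j) (ZMod q) (t - c j) = 0 := by
    intro j t
    have h1 : p x0 ⟨j, t⟩ ↔ p ⟨j, c j⟩ ⟨j, t⟩ :=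
      ⟨fun h => p.trans' (p.symm' (pc j)) h, fun h => p.trans' (pc j) h⟩
    have h2 : p ⟨j, c j⟩ ⟨j, t⟩ ↔ p x0 (shift (((t - c j).val : ℕ) : ℤ) x0) := by
      rw [← shift_val (c j) t]
      exact uniform ⟨j, c j⟩ _
    rw [h1, h2, hmem, Int.natCast_dvd_natCast, castHom_eq_natCast_val (hdvd j),
      ZMod.natCast_eq_zero_iff]
  refine ⟨q, hq0, hdvd, fun i => ZMod.castHom (hdvd i) (ZMod q) (c i), ?_, ?_⟩
  · have h0 : p x0 ⟨i0, (0 : ZMod (ks i0))⟩ := p.refl x0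
    have := (zero_iff i0 0).mp h0
    rw [zero_sub, map_neg, neg_eq_zero] at this
    exact this
  · apply Setoid.ext
    rintro ⟨i, u⟩ ⟨j, v⟩
    set m : ℤ := (((u - c i).val : ℕ) : ℤ) with hm
    have e1 : shift (-m) (⟨i, u⟩ : X r ks) = ⟨i, c i⟩ := by
      rw [hm, ← shift_val (c i) u, shift_shift, show ((((u - c i).val : ℕ) : ℤ) + -(((u - c i).val : ℕ) : ℤ)) = 0 by ring, shift_zero]
    have step1 : p ⟨i, u⟩ ⟨j, v⟩ ↔ p ⟨i, c i⟩ ⟨j, v + ((-m : ℤ) : ZMod (ks j))⟩ := by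
      have h1 := rel_shift hp (-m) ⟨i, u⟩ ⟨j, v⟩
      rw [e1] at h1
      exact h1
    have step2 : p ⟨i, c i⟩ ⟨j, v + ((-m : ℤ) : ZMod (ks j))⟩ ↔
        p x0 ⟨j, v + ((-m : ℤ) : ZMod (ks j))⟩ :=
      ⟨fun h => p.trans' (pc i) h, fun h => p.trans' (p.symm' (pc i)) h⟩
    have key := step1.trans (step2.trans (zero_iff j _))
    rw [Setoid.ker_def, key]
    simp only [F, map_sub, map_add, Int.cast_neg, map_neg, map_intCast]
    have hmq : ((m : ℤ) : ZMod q) = ZMod.castHom (hdvd i) (ZMod q) u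
        - ZMod.castHom (hdvd i) (ZMod q) (c i) := by
      rw [hm]
      push_cast
      rw [← castHom_eq_natCast_val (hdvd i), map_sub]
    rw [hmq]
    constructor
    · intro h
      linear_combination -h
    · intro h
      linear_combination -h

end Classification

section Injectivity

variable {q q' : ℕ}

lemma ker_F_inj_q [NeZero q] [NeZero q'] (hr : 0 < r)
    (hq : ∀ i, q ∣ ks i) (hq' : ∀ i, q' ∣ ks i)
    (a : Fin r → ZMod q) (a' : Fin r → ZMod q')
    (h : Setoid.ker (F q hq a) = Setoid.ker (F q' hq' a')) : q = q' := by
  set x0 : X r ks := ⟨⟨0, hr⟩, 0⟩ with hx0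
  have e : ∀ (Q : ℕ) (hQ : ∀ i, Q ∣ ks i) (b : Fin r → ZMod Q) (m : ℤ),
      Setoid.ker (F Q hQ b) x0 (shift m x0) ↔ ((m : ℤ) : ZMod Q) = 0 := by
    intro Q hQ b m
    rw [Setoid.ker_def, F_shift]
    constructor
    · intro hh
      have h2 := hh.symm
      rwa [add_eq_left] at h2
    · intro hh
      rw [hh, add_zero]
  have key : ∀ m : ℤ, (q : ℤ) ∣ m ↔ (q' : ℤ) ∣ m := by
    intro m
    rw [← ZMod.intCast_zmod_eq_zero_iff_dvd m q, ← ZMod.intCast_zmod_eq_zero_iff_dvd m q',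
      ← e q hq a m, ← e q' hq' a' m, h]
  have h1 : (q : ℤ) ∣ (q' : ℤ) := (key q').mpr dvd_rfl
  have h2 : (q' : ℤ) ∣ (q : ℤ) := (key q).mp dvd_rfl
  exact Nat.dvd_antisymm (by exact_mod_cast h1) (by exact_mod_cast h2)

lemma ker_F_inj_a [NeZero q] (hr : 0 < r) (hks : ∀ i, 0 < ks i)
    (hq hq' : ∀ i, q ∣ ks i)
    (a a' : Fin r → ZMod q) (ha : a ⟨0, hr⟩ = 0) (ha' : a' ⟨0, hr⟩ = 0)
    (h : Setoid.ker (F q hq a) = Setoid.ker (F q hq' a')) : a = a' := by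
  haveI : ∀ i, NeZero (ks i) := fun i => ⟨(hks i).ne'⟩
  set x0 : X r ks := ⟨⟨0, hr⟩, 0⟩ with hx0
  funext i
  set t : ZMod (ks i) := (((a i).val : ℕ) : ZMod (ks i)) with ht
  have hcast : ZMod.castHom (hq i) (ZMod q) t = a i := by
    rw [ht, map_natCast]
    exact ZMod.natCast_rightInverse (a i)
  have hcast' : ZMod.castHom (hq' i) (ZMod q) t = a i := by
    rw [ht, map_natCast]
    exact ZMod.natCast_rightInverse (a i)
  have h1 : Setoid.ker (F q hq a) x0 ⟨i, t⟩ := by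
    rw [Setoid.ker_def]
    show ZMod.castHom (hq ⟨0, hr⟩) (ZMod q) 0 - a ⟨0, hr⟩ = ZMod.castHom (hq i) (ZMod q) t - a i
    rw [map_zero, ha, hcast]
    ring
  rw [h, Setoid.ker_def] at h1
  have h2 : ZMod.castHom (hq' ⟨0, hr⟩) (ZMod q) 0 - a' ⟨0, hr⟩
      = ZMod.castHom (hq' i) (ZMod q) t - a' i := h1
  rw [map_zero, ha', hcast'] at h2
  have h3 : a i - a' i = 0 := by rw [← h2]; ring
  exact sub_eq_zero.mp h3

end Injectivity

section Counting

lemma card_normalized (hr : 0 < r) (q : ℕ) [NeZero q] :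
    Nat.card {a : Fin r → ZMod q // a ⟨0, hr⟩ = 0} = q ^ (r - 1) := by
  let e : {a : Fin r → ZMod q // a ⟨0, hr⟩ = 0} ≃ ({i : Fin r // i ≠ ⟨0, hr⟩} → ZMod q) :=
    { toFun := fun a j => a.1 j.1
      invFun := fun b => ⟨fun i => if h : i = ⟨0, hr⟩ then 0 else b ⟨i, h⟩, by simp⟩
      left_inv := fun a => by
        apply Subtype.ext
        funext i
        show (if h : i = ⟨0, hr⟩ then 0 else a.1 i) = a.1 i
        by_cases h : i = ⟨0, hr⟩
        · rw [dif_pos h, h, a.2]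
        · rw [dif_neg h]
      right_inv := fun b => by
        funext j
        show (if h : (j : Fin r) = ⟨0, hr⟩ then 0 else b ⟨(j : Fin r), h⟩) = b j
        exact dif_neg j.2 }
  have hcard : Fintype.card {i : Fin r // i ≠ ⟨0, hr⟩} = r - 1 := by
    rw [Fintype.card_subtype_compl, Fintype.card_subtype_eq, Fintype.card_fin]
  rw [Nat.card_congr e, Nat.card_eq_fintype_card, Fintype.card_fun, hcard,
    ZMod.card]

end Counting

end ICEP

/-- Let `γ` be a permutation with cycles of lengths `k₁,…,k_r`, `k = Σ k_i` (modelled as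
the rotation on the disjoint union of cycles `Z/k_iZ`), and `γ̄` the partition into the
cycles.  The number of partitions `p` all of whose blocks have even size, with
`γ(p) = p` and `p ∨ γ̄ = 1` (i.e. `⊤`), equals the sum of `q^(r−1)` over all common
divisors `q` of `k₁,…,k_r` such that `k/q` is even. -/
theorem invariant_connecting_even_partitions (r : ℕ) (hr : 0 < r) (ks : Fin r → ℕ)
    (hks : ∀ i, 0 < ks i) :
    Nat.card {p : Setoid ((i : Fin r) × ZMod (ks i)) //
        HasEvenBlocks p ∧
        Setoid.permMap (sigmaRot r ks) p = p ∧
        p ⊔ Setoid.ker (Sigma.fst : ((i : Fin r) × ZMod (ks i)) → Fin r) = ⊤} =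
      ∑ q ∈ (Finset.univ.gcd ks).divisors.filter
          (fun q => Even ((∑ i, ks i) / q)), q ^ (r - 1) := by
  classical
  haveI : ∀ i, NeZero (ks i) := fun i => ⟨(hks i).ne'⟩
  set D : Finset ℕ := (Finset.univ.gcd ks).divisors.filter
      (fun q => Even ((∑ i, ks i) / q)) with hD
  have hDpos : ∀ q ∈ D, 0 < q := fun q hq =>
    Nat.pos_of_mem_divisors (Finset.mem_filter.mp hq).1
  have hDdvd : ∀ q ∈ D, ∀ i, q ∣ ks i := fun q hq i =>
    dvd_trans (Nat.dvd_of_mem_divisors (Finset.mem_filter.mp hq).1)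
      (Finset.gcd_dvd (Finset.mem_univ i))
  have hgcd0 : Finset.univ.gcd ks ≠ 0 := by
    intro h
    have h2 := Finset.gcd_eq_zero_iff.mp h ⟨0, hr⟩ (Finset.mem_univ _)
    exact (hks _).ne' h2
  haveI inst2 : ∀ (s : {x // x ∈ D}), NeZero (s : ℕ) :=
    fun s => ⟨(hDpos s.1 s.2).ne'⟩
  let T := (s : {x // x ∈ D}) ×
    {a : Fin r → ZMod (s : ℕ) // a ⟨0, hr⟩ = 0}
  let Ψ : T → {p : Setoid ((i : Fin r) × ZMod (ks i)) //
      HasEvenBlocks p ∧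
      Setoid.permMap (sigmaRot r ks) p = p ∧
      p ⊔ Setoid.ker (Sigma.fst : ((i : Fin r) × ZMod (ks i)) → Fin r) = ⊤} := fun t =>
    ⟨Setoid.ker (ICEP.F (t.1 : ℕ) (hDdvd t.1 t.1.2) t.2.1), by
      refine ⟨?_, ICEP.ker_F_invariant _ _ _, ICEP.ker_F_join _ _ _⟩
      intro x
      rw [ICEP.card_block hks (t.1 : ℕ) (hDdvd t.1 t.1.2) t.2.1 x]
      exact (Finset.mem_filter.mp t.1.2).2⟩
  have hbij : Function.Bijective Ψ := by
    constructor
    · rintro ⟨⟨q, hqD⟩, a, ha⟩ ⟨⟨q', hqD'⟩, a', ha'⟩ h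
      have hker := congrArg Subtype.val h
      simp only [Ψ] at hker
      haveI : NeZero q := ⟨(hDpos q hqD).ne'⟩
      haveI : NeZero q' := ⟨(hDpos q' hqD').ne'⟩
      have hqq : q = q' :=
        ICEP.ker_F_inj_q hr (hDdvd q hqD) (hDdvd q' hqD') a a' hker
      subst hqq
      have haa : a = a' :=
        ICEP.ker_F_inj_a hr hks (hDdvd q hqD) (hDdvd q hqD') a a' ha ha' hker
      subst haa
      rfl
    · rintro ⟨p, heven, hinv, hjoin⟩
      obtain ⟨q, hq0, hdvd, a, ha0, hpeq⟩ := ICEP.classify hr hks hinv hjoin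
      haveI : NeZero q := ⟨hq0.ne'⟩
      have hqD : q ∈ D := by
        rw [hD, Finset.mem_filter, Nat.mem_divisors]
        refine ⟨⟨Finset.dvd_gcd fun i _ => hdvd i, hgcd0⟩, ?_⟩
        have h2 := heven ⟨⟨0, hr⟩, 0⟩
        rw [hpeq] at h2
        rwa [ICEP.card_block hks q hdvd a] at h2
      exact ⟨⟨⟨q, hqD⟩, ⟨a, ha0⟩⟩, Subtype.ext hpeq.symm⟩
  rw [← Nat.card_eq_of_bijective Ψ hbij]
  have hcardT : Nat.card T = ∑ s : {x // x ∈ D}, (s : ℕ) ^ (r - 1) := by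
    rw [Nat.card_eq_fintype_card, Fintype.card_sigma]
    apply Finset.sum_congr rfl
    intro s _
    rw [← Nat.card_eq_fintype_card, ICEP.card_normalized hr (s : ℕ)]
  rw [hcardT, hD]
  exact Finset.sum_coe_sort D (fun q => q ^ (r - 1))
end
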